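/- arXiv:2406.16879 — 4 statements merged into one kernel-verified Lean document; each statement's English description precedes it below -/
import Mathlib

section
/- If I and J are k-element subsets of [n] that are weakly separated, then I and J are noncrossing. -/
open Finset

/-- `allLT I J` means `max I < min J` (vacuously true if either set is empty). -/
def allLT (I J : Finset ℕ) : Prop := ∀ i ∈ I, ∀ j ∈ J, i < j

/-- `I` and `J` are weakly separated. -/
def WeaklySeparated (I J : Finset ℕ) : Prop :=
  (∃ I1 I2 : Finset ℕ, Disjoint I1 I2 ∧ I1 ∪ I2 = I \ J ∧
      allLT I1 (J \ I) ∧ allLT (J \ I) I2) ∨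
  (∃ J1 J2 : Finset ℕ, Disjoint J1 J2 ∧ J1 ∪ J2 = J \ I ∧
      allLT J1 (I \ J) ∧ allLT (I \ J) J2)

/-- the set `{i_a, i_{a+1}, ..., i_b}` of entries of `I` in (1-indexed) positions `a` to `b`. -/
def posSlice (I : Finset ℕ) (a b : ℕ) : Finset ℕ :=
  I.filter fun x => a ≤ (I.filter (· ≤ x)).card ∧ (I.filter (· ≤ x)).card ≤ b

/-- the pair of `k`-subsets `I`, `J` is noncrossing. -/
def Noncrossing (k : ℕ) (I J : Finset ℕ) : Prop :=
  ∀ a b : ℕ, 1 ≤ a → a < b → b ≤ k →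
    WeaklySeparated (posSlice I a b) (posSlice J a b) ∨
    posSlice I (a + 1) (b - 1) ≠ posSlice J (a + 1) (b - 1)

/-- the `a`-th smallest entry of `I` (1-indexed). -/
def nth (I : Finset ℕ) (a : ℕ) : ℕ := (I.sort (· ≤ ·)).getD (a - 1) 0

/-- `T` is a rectangular semistandard Young tableau with entries in `[n]`. -/
def IsSSYT {k m : ℕ} (n : ℕ) (T : Fin k → Fin m → ℕ) : Prop :=
  (∀ i j, T i j ∈ Finset.Icc 1 n) ∧
  (∀ i (j j' : Fin m), j ≤ j' → T i j ≤ T i j') ∧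
  (∀ (i i' : Fin k) j, i < i' → T i j < T i' j)

/-- the rank of `x` in `A`: the number of elements of `A` that are `≤ x`. -/
def rk (A : Finset ℕ) (x : ℕ) : ℕ := (A.filter (· ≤ x)).card

lemma mem_posSlice {I : Finset ℕ} {a b x : ℕ} :
    x ∈ posSlice I a b ↔ x ∈ I ∧ a ≤ rk I x ∧ rk I x ≤ b := by
  simp [posSlice, rk, Finset.mem_filter, and_assoc]

lemma rk_mono (A : Finset ℕ) {x y : ℕ} (h : x ≤ y) : rk A x ≤ rk A y := by
  apply Finset.card_le_card
  intro z hz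
  rw [Finset.mem_filter] at hz ⊢
  exact ⟨hz.1, le_trans hz.2 h⟩

lemma rk_lt_rk {A : Finset ℕ} {x y : ℕ} (hy : y ∈ A) (hxy : x < y) : rk A x < rk A y := by
  apply Finset.card_lt_card
  rw [Finset.ssubset_iff_of_subset]
  · exact ⟨y, Finset.mem_filter.2 ⟨hy, le_refl _⟩, fun h => by
      have := (Finset.mem_filter.1 h).2; omega⟩
  · intro z hz
    rw [Finset.mem_filter] at hz ⊢
    exact ⟨hz.1, le_trans hz.2 (le_of_lt hxy)⟩

lemma one_le_rk {A : Finset ℕ} {x : ℕ} (hx : x ∈ A) : 1 ≤ rk A x :=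
  Finset.card_pos.2 ⟨x, Finset.mem_filter.2 ⟨hx, le_refl _⟩⟩

lemma rk_le_card (A : Finset ℕ) (x : ℕ) : rk A x ≤ A.card :=
  Finset.card_le_card (Finset.filter_subset _ _)

lemma rk_eq_iff {A : Finset ℕ} {x y : ℕ} (hx : x ∈ A) (hy : y ∈ A)
    (h : rk A x = rk A y) : x = y := by
  rcases lt_trichotomy x y with h' | h' | h'
  · exact absurd h (Nat.ne_of_lt (rk_lt_rk hy h'))
  · exact h'
  · exact absurd h.symm (Nat.ne_of_lt (rk_lt_rk hx h'))

lemma exists_rank {A : Finset ℕ} {a : ℕ} (h1 : 1 ≤ a) (h2 : a ≤ A.card) :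
    ∃ x ∈ A, rk A x = a := by
  have himg : A.image (rk A) = Finset.Icc 1 A.card := by
    apply Finset.eq_of_subset_of_card_le
    · intro r hr
      obtain ⟨x, hx, rfl⟩ := Finset.mem_image.1 hr
      exact Finset.mem_Icc.2 ⟨one_le_rk hx, rk_le_card A x⟩
    · rw [Nat.card_Icc]
      rw [Finset.card_image_of_injOn (fun x hx y hy hxy => rk_eq_iff hx hy hxy)]
      omega
  have : a ∈ A.image (rk A) := by rw [himg]; exact Finset.mem_Icc.2 ⟨h1, h2⟩
  obtain ⟨x, hx, hxa⟩ := Finset.mem_image.1 this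
  exact ⟨x, hx, hxa⟩

lemma rk_exists_between {A : Finset ℕ} {x y : ℕ} (h : rk A x < rk A y) :
    ∃ e ∈ A, x < e ∧ e ≤ y := by
  by_contra h'
  push_neg at h'
  have hsub : A.filter (· ≤ y) ⊆ A.filter (· ≤ x) := by
    intro e he
    rw [Finset.mem_filter] at he ⊢
    refine ⟨he.1, ?_⟩
    have h2 := he.2
    by_contra hc
    have := h' e he.1 (by omega)
    omega
  exact absurd (Finset.card_le_card hsub) (by rw [rk, rk] at h; omega)

lemma rk_add (I J : Finset ℕ) (t : ℕ) : rk I t = rk (I ∩ J) t + rk (I \ J) t := by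
  have hdisj : Disjoint ((I ∩ J).filter (· ≤ t)) ((I \ J).filter (· ≤ t)) := by
    rw [Finset.disjoint_left]
    intro x hx hx'
    have h1 := (Finset.mem_filter.1 hx).1
    have h2 := (Finset.mem_filter.1 hx').1
    rw [Finset.mem_inter] at h1
    rw [Finset.mem_sdiff] at h2
    exact h2.2 h1.2
  rw [rk, rk, rk, ← Finset.card_union_of_disjoint hdisj, ← Finset.filter_union]
  congr 1
  ext x
  simp only [Finset.mem_filter, Finset.mem_union, Finset.mem_inter, Finset.mem_sdiff]
  tauto

lemma ws_symm {I J : Finset ℕ} (h : WeaklySeparated I J) : WeaklySeparated J I := by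
  rcases h with ⟨I1, I2, h1, h2, h3, h4⟩ | ⟨J1, J2, h1, h2, h3, h4⟩
  · exact Or.inr ⟨I1, I2, h1, h2, h3, h4⟩
  · exact Or.inl ⟨J1, J2, h1, h2, h3, h4⟩

/-- Key lemma: an up-down-up pattern of rank differences contradicts weak separation. -/
lemma key {I J : Finset ℕ} (hc : I.card = J.card) (hws : WeaklySeparated I J)
    {x y z : ℕ} (hxy : x < y) (hyz : y < z)
    (hx : rk J x < rk I x) (hy : rk I y ≤ rk J y) (hz : rk J z < rk I z) : False := by
  have hIJ : I ∩ J = J ∩ I := Finset.inter_comm I J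
  have hDE : (I \ J).card = (J \ I).card := by
    have h1 : (I ∩ J).card + (I \ J).card = I.card := Finset.card_inter_add_card_sdiff I J
    have h2 : (J ∩ I).card + (J \ I).card = J.card := Finset.card_inter_add_card_sdiff J I
    rw [hIJ] at h1
    omega
  have hxr := rk_add I J x; have hxr' := rk_add J I x
  have hyr := rk_add I J y; have hyr' := rk_add J I y
  have hzr := rk_add I J z; have hzr' := rk_add J I z
  rw [hIJ] at hxr hyr hzr
  -- get e ∈ E ∩ (x, y]
  have hEe : rk (J \ I) x < rk (J \ I) y := by
    have := rk_mono (I \ J) (le_of_lt hxy)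
    omega
  obtain ⟨e, heE, hxe, hey⟩ := rk_exists_between hEe
  -- get d ∈ D ∩ (y, z]
  have hDd : rk (I \ J) y < rk (I \ J) z := by
    have := rk_mono (J \ I) (le_of_lt hyz)
    omega
  obtain ⟨d, hdD, hyd, hdz⟩ := rk_exists_between hDd
  rcases hws with ⟨I1, I2, _, hun, h1E, hE2⟩ | ⟨J1, J2, _, hun, h1D, hD2⟩
  · -- split of D = I \ J
    have hd : d ∈ I1 ∪ I2 := by rw [hun]; exact hdD
    rcases Finset.mem_union.1 hd with hd1 | hd2
    · exact absurd (h1E d hd1 e heE) (by omega)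
    · -- all of E is < d ≤ z, so rk E z = E.card
      have hEfull : (J \ I).filter (· ≤ z) = J \ I := by
        apply Finset.filter_true_of_mem
        intro e' he'
        have := hE2 e' he' d hd2
        omega
      have : rk (J \ I) z = (J \ I).card := by rw [rk, hEfull]
      have := rk_le_card (I \ J) z
      omega
  · -- split of E = J \ I
    have hd0 : 0 < rk (I \ J) x := by omega
    obtain ⟨d0, hd0'⟩ := Finset.card_pos.1 hd0
    have hd0D := (Finset.mem_filter.1 hd0').1
    have hd0x : d0 ≤ x := (Finset.mem_filter.1 hd0').2
    have he : e ∈ J1 ∪ J2 := by rw [hun]; exact heE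
    rcases Finset.mem_union.1 he with he1 | he2
    · exact absurd (h1D e he1 d0 hd0D) (by omega)
    · exact absurd (hD2 d hdD e he2) (by omega)

lemma exists_split (D E : Finset ℕ) (hdisj : ∀ x ∈ D, x ∉ E)
    (h : ∀ d1 ∈ D, ∀ e ∈ E, ∀ d2 ∈ D, d1 < e → e < d2 → False) :
    ∃ E1 E2 : Finset ℕ, Disjoint E1 E2 ∧ E1 ∪ E2 = E ∧ allLT E1 D ∧ allLT D E2 := by
  refine ⟨E.filter (fun e => ∀ d ∈ D, e < d), E \ E.filter (fun e => ∀ d ∈ D, e < d),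
    Finset.disjoint_sdiff, Finset.union_sdiff_of_subset (Finset.filter_subset _ _), ?_, ?_⟩
  · intro e he d hd
    exact (Finset.mem_filter.1 he).2 d hd
  · intro d hd e he
    rw [Finset.mem_sdiff, Finset.mem_filter] at he
    obtain ⟨heE, he2⟩ := he
    push_neg at he2
    obtain ⟨d1, hd1, hd1e⟩ := he2 heE
    have hd1e' : d1 < e := lt_of_le_of_ne hd1e (fun h' => hdisj d1 hd1 (h' ▸ heE))
    by_contra hc
    push_neg at hc
    have hec : e < d := lt_of_le_of_ne hc (fun h' => hdisj d hd (h' ▸ heE))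
    exact h d1 hd1 e heE d hd hd1e' hec

/-- If inner slices agree then the crossing pattern `i_a < j_a < i_b < j_b` is impossible. -/
lemma crossing_false {I J : Finset ℕ} (hc : I.card = J.card) (hws : WeaklySeparated I J)
    {a b : ℕ} (hab : a < b)
    (hC : posSlice I (a + 1) (b - 1) = posSlice J (a + 1) (b - 1))
    {ia ib ja jb : ℕ}
    (hiaI : ia ∈ I) (hria : rk I ia = a) (hibI : ib ∈ I) (hrib : rk I ib = b)
    (hjaJ : ja ∈ J) (hrja : rk J ja = a) (hjbJ : jb ∈ J) (hrjb : rk J jb = b)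
    (h1 : ia < ja) (h2 : ja < ib) (h3 : ib < jb) : False := by
  refine key hc hws h1 h2 ?_ ?_ ?_
  · have := rk_lt_rk hjaJ h1
    omega
  · -- rk I ja ≤ rk J ja = a
    have hsub : I.filter (· ≤ ja) ⊆ I.filter (· ≤ ia) := by
      intro x hx
      rw [Finset.mem_filter] at hx ⊢
      refine ⟨hx.1, ?_⟩
      by_contra hcx
      push_neg at hcx
      have hrx : a < rk I x := hria ▸ rk_lt_rk hx.1 hcx
      by_cases hb : rk I x ≤ b - 1
      · have hx1 : x ∈ posSlice I (a + 1) (b - 1) :=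
          mem_posSlice.2 ⟨hx.1, by omega, hb⟩
        rw [hC] at hx1
        obtain ⟨hxJ, hxr, _⟩ := mem_posSlice.1 hx1
        have : rk J x ≤ rk J ja := rk_mono J hx.2
        omega
      · have : b ≤ rk I x := by omega
        have hxib : ¬ x < ib := fun h' => by
          have := rk_lt_rk hibI h'
          omega
        have := hx.2
        omega
    have := Finset.card_le_card hsub
    rw [← rk, ← rk] at this
    omega
  · have := rk_lt_rk hjbJ h3
    omega

/-- Weakly separated `k`-subsets are noncrossing. -/
theorem weakly_separated_implies_noncrossing
    (n k : ℕ) (I J : Finset ℕ) (hI : I ⊆ Finset.Icc 1 n) (hJ : J ⊆ Finset.Icc 1 n)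
    (hIc : I.card = k) (hJc : J.card = k)
    (hws : WeaklySeparated I J) :
    Noncrossing k I J := by
  intro a b ha hab hbk
  by_cases hC : posSlice I (a + 1) (b - 1) = posSlice J (a + 1) (b - 1)
  swap
  · exact Or.inr hC
  left
  have hcIJ : I.card = J.card := by omega
  obtain ⟨ia, hiaI, hria⟩ := exists_rank (A := I) ha (by omega)
  obtain ⟨ib, hibI, hrib⟩ := exists_rank (A := I) (a := b) (by omega) (by omega)
  obtain ⟨ja, hjaJ, hrja⟩ := exists_rank (A := J) ha (by omega)
  obtain ⟨jb, hjbJ, hrjb⟩ := exists_rank (A := J) (a := b) (by omega) (by omega)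
  set I' := posSlice I a b with hI'
  set J' := posSlice J a b with hJ'
  have hiaib : ia < ib := by
    by_contra h
    push_neg at h
    have := rk_mono I h
    omega
  have hjajb : ja < jb := by
    by_contra h
    push_neg at h
    have := rk_mono J h
    omega
  -- difference sets are contained in the endpoint pairs
  have hDsub : ∀ x ∈ I' \ J', x = ia ∨ x = ib := by
    intro x hx
    rw [Finset.mem_sdiff] at hx
    obtain ⟨hxI', hxJ'⟩ := hx
    obtain ⟨hxI, hxa, hxb⟩ := mem_posSlice.1 hxI'
    by_cases h1 : rk I x = a
    · exact Or.inl (rk_eq_iff hxI hiaI (by omega))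
    by_cases h2 : rk I x = b
    · exact Or.inr (rk_eq_iff hxI hibI (by omega))
    exfalso
    have hin : x ∈ posSlice I (a + 1) (b - 1) := mem_posSlice.2 ⟨hxI, by omega, by omega⟩
    rw [hC] at hin
    obtain ⟨hxJ, hj1, hj2⟩ := mem_posSlice.1 hin
    exact hxJ' (mem_posSlice.2 ⟨hxJ, by omega, by omega⟩)
  have hEsub : ∀ x ∈ J' \ I', x = ja ∨ x = jb := by
    intro x hx
    rw [Finset.mem_sdiff] at hx
    obtain ⟨hxJ', hxI'⟩ := hx
    obtain ⟨hxJ, hxa, hxb⟩ := mem_posSlice.1 hxJ'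
    by_cases h1 : rk J x = a
    · exact Or.inl (rk_eq_iff hxJ hjaJ (by omega))
    by_cases h2 : rk J x = b
    · exact Or.inr (rk_eq_iff hxJ hjbJ (by omega))
    exfalso
    have hin : x ∈ posSlice J (a + 1) (b - 1) := mem_posSlice.2 ⟨hxJ, by omega, by omega⟩
    rw [← hC] at hin
    obtain ⟨hxI, hi1, hi2⟩ := mem_posSlice.1 hin
    exact hxI' (mem_posSlice.2 ⟨hxI, by omega, by omega⟩)
  have hdisjDE : ∀ x ∈ I' \ J', x ∉ J' \ I' := by
    intro x hx hx'
    rw [Finset.mem_sdiff] at hx hx'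
    exact hx.2 hx'.1
  have hdisjED : ∀ x ∈ J' \ I', x ∉ I' \ J' := by
    intro x hx hx'
    rw [Finset.mem_sdiff] at hx hx'
    exact hx.2 hx'.1
  by_cases hP : ∃ d1 ∈ I' \ J', ∃ e ∈ J' \ I', ∃ d2 ∈ I' \ J', d1 < e ∧ e < d2
  · by_cases hQ : ∃ e1 ∈ J' \ I', ∃ d ∈ I' \ J', ∃ e2 ∈ J' \ I', e1 < d ∧ d < e2
    · exfalso
      obtain ⟨d1, hd1, e, he, d2, hd2, hd1e, hed2⟩ := hP
      obtain ⟨e1, he1, d, hd, e2, he2, he1d, hde2⟩ := hQ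
      have hd1' := hDsub d1 hd1
      have hd2' := hDsub d2 hd2
      have hd' := hDsub d hd
      have he' := hEsub e he
      have he1' := hEsub e1 he1
      have he2' := hEsub e2 he2
      -- identify endpoints
      have hd12 : d1 = ia ∧ d2 = ib := by
        rcases hd1' with rfl | rfl <;> rcases hd2' with rfl | rfl <;> omega
      have he12 : e1 = ja ∧ e2 = jb := by
        rcases he1' with rfl | rfl <;> rcases he2' with rfl | rfl <;> omega
      obtain ⟨rfl, rfl⟩ := hd12
      obtain ⟨rfl, rfl⟩ := he12
      rcases he' with rfl | rfl <;> rcases hd' with rfl | rfl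
      · omega
      · -- e = ja, d = ib : pattern ia < ja < ib < jb
        exact crossing_false hcIJ hws hab hC hiaI hria hibI hrib hjaJ hrja hjbJ hrjb
          (by omega) (by omega) (by omega)
      · -- e = jb, d = ia : pattern ja < ia < jb < ib
        exact crossing_false hcIJ.symm (ws_symm hws) hab hC.symm hjaJ hrja hjbJ hrjb
          hiaI hria hibI hrib (by omega) (by omega) (by omega)
      · omega
    · -- no d strictly between two e's: split I' \ J'
      push_neg at hQ
      obtain ⟨D1, D2, h1, h2, h3, h4⟩ := exists_split (J' \ I') (I' \ J') hdisjED
        (fun e1 he1 d hd e2 he2 h h' => absurd h' (not_lt.2 (hQ e1 he1 d hd e2 he2 h)))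
      exact Or.inl ⟨D1, D2, h1, h2, h3, h4⟩
  · -- no e strictly between two d's: split J' \ I'
    push_neg at hP
    obtain ⟨E1, E2, h1, h2, h3, h4⟩ := exists_split (I' \ J') (J' \ I') hdisjDE
      (fun d1 hd1 e he d2 hd2 h h' => absurd h' (not_lt.2 (hP d1 hd1 e he d2 hd2 h)))
    exact Or.inr ⟨E1, E2, h1, h2, h3, h4⟩
end

section
/- If S and T are semistandard Young tableaux of rectangular shape with k rows and entries in [n], then S ∪ T, the row-increasing tableau whose i-th row is the multiset union of the i-th rows of S and T sorted in weakly increasing order, is again a semistandard Young tableau. -/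
open Finset

lemma countP_map_univ {m : ℕ} (f : Fin m → ℕ) (p : ℕ → Prop) [DecidablePred p] :
    Multiset.countP p (Finset.univ.val.map f) = (Finset.univ.filter (fun c => p (f c))).card := by
  rw [Multiset.countP_map, Finset.card_filter]
  simp [Multiset.countP_eq_card_filter, Finset.filter_val, Function.comp]
  rfl

/-- The row-wise sorted multiset union of two semistandard tableaux is semistandard. -/
theorem union_of_ssyt_is_ssyt
    (k m1 m2 n : ℕ) (S : Fin k → Fin m1 → ℕ) (T : Fin k → Fin m2 → ℕ)
    (U : Fin k → Fin (m1 + m2) → ℕ)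
    (hS : IsSSYT n S) (hT : IsSSYT n T)
    (hrow : ∀ i : Fin k,
      (Finset.univ.val.map (U i)) = (Finset.univ.val.map (S i)) + (Finset.univ.val.map (T i)))
    (hUmono : ∀ i : Fin k, ∀ j j' : Fin (m1 + m2), j ≤ j' → U i j ≤ U i j') :
    IsSSYT n U := by
  obtain ⟨hSmem, hSrow, hScol⟩ := hS
  obtain ⟨hTmem, hTrow, hTcol⟩ := hT
  refine ⟨?_, hUmono, ?_⟩
  · intro i j
    have h : U i j ∈ Multiset.map (U i) Finset.univ.val :=
      Multiset.mem_map_of_mem _ (Finset.mem_univ j)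
    rw [hrow i] at h
    rcases Multiset.mem_add.mp h with h | h <;>
      obtain ⟨c, -, hc⟩ := Multiset.mem_map.mp h
    · exact hc ▸ hSmem i c
    · exact hc ▸ hTmem i c
  · intro i i' j hii
    set x := U i j with hx
    by_contra hle
    push_neg at hle
    have h1 : (j : ℕ) + 1 ≤ Multiset.countP (· ≤ x) (Finset.univ.val.map (U i')) := by
      rw [countP_map_univ]
      calc (j : ℕ) + 1 = (Finset.Iic j).card := by
            rw [Fin.card_Iic]
        _ ≤ _ := by
            apply Finset.card_le_card
            intro c hc
            simp only [Finset.mem_Iic] at hc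
            simp only [Finset.mem_filter, Finset.mem_univ, true_and]
            exact le_trans (hUmono i' c j hc) hle
    have hS2 : (Finset.univ.filter (fun c => S i' c ≤ x)).card ≤
        (Finset.univ.filter (fun c => S i c < x)).card := by
      apply Finset.card_le_card
      intro c hc
      simp only [Finset.mem_filter, Finset.mem_univ, true_and] at hc ⊢
      exact lt_of_lt_of_le (hScol i i' c hii) hc
    have hT2 : (Finset.univ.filter (fun c => T i' c ≤ x)).card ≤
        (Finset.univ.filter (fun c => T i c < x)).card := by
      apply Finset.card_le_card
      intro c hc
      simp only [Finset.mem_filter, Finset.mem_univ, true_and] at hc ⊢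
      exact lt_of_lt_of_le (hTcol i i' c hii) hc
    have hlt : Multiset.countP (· < x) (Finset.univ.val.map (U i)) ≤ (j : ℕ) := by
      rw [countP_map_univ]
      calc _ ≤ (Finset.Iio j).card := by
            apply Finset.card_le_card
            intro c hc
            simp only [Finset.mem_filter, Finset.mem_univ, true_and] at hc
            simp only [Finset.mem_Iio]
            by_contra hcj
            push_neg at hcj
            exact absurd (hUmono i j c hcj) (not_le.mpr hc)
        _ = (j : ℕ) := by rw [Fin.card_Iio]
    have h2 : Multiset.countP (· ≤ x) (Finset.univ.val.map (U i')) ≤ (j : ℕ) := by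
      rw [hrow i', Multiset.countP_add, countP_map_univ, countP_map_univ]
      rw [hrow i, Multiset.countP_add, countP_map_univ, countP_map_univ] at hlt
      omega
    omega
end

section
/- The number of semistandard Young tableaux of rectangular shape with k rows and 2 columns and entries in [n] equals a_{k,n,2} = Π_{i=1}^{k} Π_{j=1}^{2} (n - i + j)/(k + 2 - i - j + 1). -/
/-!
Read the columns of a tableau as `k`-subsets `A`, `B` of `range n`. The rows are weakly
increasing iff the `i`-th smallest element of `A` is at most that of `B` for every `i`, that is,
iff every initial segment `[0, t)` contains at least as many elements of `A` as of `B`.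
Sorting such dominating pairs by whether the largest available letter lies in `A` and in `B`
gives a Pascal-type recursion, solved by the Lindström–Gessel–Viennot determinant
`C(n, a) C(n, b + 1) - C(n, a + 1) C(n, b)` for `|A| = a`, `|B| = b + 1`. For `a = b + 1 = k`
this is the Narayana number `C(n, k) C(n + 1, k) / (k + 1)`, which is also the value of the
hook-content product.
-/

open Finset

open scoped Nat

theorem card_filter_union_product {α β : Type*} [DecidableEq α] [DecidableEq β]
    (p : α × β → Prop) [DecidablePred p] {s s' : Finset α} {t t' : Finset β}
    (hs : Disjoint s s') (ht : Disjoint t t') :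
    #{x ∈ (s ∪ s') ×ˢ (t ∪ t') | p x} = #{x ∈ s ×ˢ t | p x} + #{x ∈ s ×ˢ t' | p x} +
      (#{x ∈ s' ×ˢ t | p x} + #{x ∈ s' ×ˢ t' | p x}) := by
  have hs' (u : Finset β) : Disjoint (s ×ˢ u) (s' ×ˢ u) := disjoint_product.2 (Or.inl hs)
  have ht' (u : Finset α) : Disjoint (u ×ˢ t) (u ×ˢ t') := disjoint_product.2 (Or.inr ht)
  rw [union_product, filter_union, card_union_of_disjoint (disjoint_filter_filter (hs' _)),
    product_union, product_union, filter_union, filter_union,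
    card_union_of_disjoint (disjoint_filter_filter (ht' s)),
    card_union_of_disjoint (disjoint_filter_filter (ht' s'))]

theorem StrictMono.eq_of_image_univ_eq {α : Type*} [LinearOrder α] {k : ℕ} {f g : Fin k → α}
    (hf : StrictMono f) (hg : StrictMono g) (h : univ.image f = univ.image g) : f = g :=
  (hf.range_inj hg).1 (by simpa using congrArg ((↑) : Finset α → Set α) h)

theorem Nat.choose_succ_mul_add_choose_mul (n j : ℕ) :
    n.choose (j + 1) * (j + 1) + n.choose j * j = n * n.choose j := by
  rcases le_or_gt j n with h | h
  · rw [Nat.choose_succ_right_eq, mul_comm n, ← mul_add, Nat.sub_add_cancel h]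
  · simp [Nat.choose_eq_zero_of_lt h, Nat.choose_eq_zero_of_lt (h.trans (Nat.lt_succ_self j))]

theorem prod_Icc_natCast_sub_add_one {R : Type*} [CommRing R] (m k : ℕ) :
    ∏ i ∈ Icc 1 k, ((m : R) - i + 1) = (k ! * m.choose k : ℕ) := by
  rw [← Nat.descFactorial_eq_factorial_mul_choose, ← descPochhammer_eval_eq_descFactorial,
    descPochhammer_eval_eq_prod_range, ← Ico_add_one_right_eq_Icc, prod_Ico_eq_prod_range,
    Nat.add_sub_cancel]
  refine prod_congr rfl fun i _ => ?_
  push_cast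
  ring

def Dominates (A B : Finset ℕ) : Prop :=
  ∀ t, #{x ∈ B | x < t} ≤ #{x ∈ A | x < t}

open Classical in
noncomputable def dominatingPairs (n a b : ℕ) : Finset (Finset ℕ × Finset ℕ) :=
  {p ∈ (range n).powersetCard a ×ˢ (range n).powersetCard b | Dominates p.1 p.2}

section Dominates

variable {A B : Finset ℕ} {n : ℕ}

theorem filter_lt_eq_self_of_subset_range (hA : A ⊆ range n) {t : ℕ} (ht : n ≤ t) :
    {x ∈ A | x < t} = A :=
  filter_true_of_mem fun _ hx => (mem_range.1 (hA hx)).trans_le ht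

theorem filter_lt_insert_self (hA : A ⊆ range n) : {x ∈ insert n A | x < n} = A := by
  rw [filter_insert, if_neg (lt_irrefl n), filter_lt_eq_self_of_subset_range hA le_rfl]

theorem Dominates.card_le (hA : A ⊆ range n) (hB : B ⊆ range n) (h : Dominates A B) :
    #B ≤ #A := by
  simpa only [filter_lt_eq_self_of_subset_range hA le_rfl,
    filter_lt_eq_self_of_subset_range hB le_rfl] using h n

theorem dominates_iff_filter_lt (hA : A ⊆ range (n + 1)) (hB : B ⊆ range (n + 1)) :
    Dominates A B ↔ Dominates {x ∈ A | x < n} {x ∈ B | x < n} ∧ #B ≤ #A := by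
  have filter_filter_lt (X : Finset ℕ) (t : ℕ) :
      {x ∈ {x ∈ X | x < n} | x < t} = {x ∈ X | x < min n t} := by
    ext; simp [and_assoc]
  simp only [Dominates, filter_filter_lt]
  refine ⟨fun h => ⟨fun t => h _, Dominates.card_le hA hB h⟩, fun ⟨h, hcard⟩ t => ?_⟩
  rcases le_or_gt t n with ht | ht
  · simpa [min_eq_right ht] using h t
  · rwa [filter_lt_eq_self_of_subset_range hA ht, filter_lt_eq_self_of_subset_range hB ht]

open Classical in
/-- In the recursion on `n`, `f` and `g` are `id` or `insert n`: the two ways of extending a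
subset of `range n` to one of `range (n + 1)`. -/
theorem card_filter_dominates_image_product {f g : Finset ℕ → Finset ℕ}
    (hf : ∀ A ⊆ range n, f A ⊆ range (n + 1) ∧ {x ∈ f A | x < n} = A)
    (hg : ∀ B ⊆ range n, g B ⊆ range (n + 1) ∧ {x ∈ g B | x < n} = B)
    {X Y : Finset (Finset ℕ)} (hX : ∀ A ∈ X, A ⊆ range n) (hY : ∀ B ∈ Y, B ⊆ range n)
    (hcard : ∀ A ∈ X, ∀ B ∈ Y, Dominates A B → #(g B) ≤ #(f A)) :
    #{p ∈ X.image f ×ˢ Y.image g | Dominates p.1 p.2} = #{p ∈ X ×ˢ Y | Dominates p.1 p.2} := by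
  have hf_inj : Set.InjOn f X := Set.LeftInvOn.injOn fun A hA => (hf A (hX A hA)).2
  have hg_inj : Set.InjOn g Y := Set.LeftInvOn.injOn fun B hB => (hg B (hY B hB)).2
  rw [← prodMap_image_product, filter_image,
    card_image_of_injOn (f := Prod.map f g)
      ((hf_inj.prodMap hg_inj).mono fun p hp => mem_product.1 (mem_filter.1 hp).1)]
  refine congrArg card (filter_congr fun ⟨A, B⟩ hp => ?_)
  obtain ⟨hA, hB⟩ := mem_product.1 hp
  obtain ⟨hfA, hAf⟩ := hf A (hX A hA)
  obtain ⟨hgB, hBg⟩ := hg B (hY B hB)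
  change Dominates (f A) (g B) ↔ Dominates A B
  rw [dominates_iff_filter_lt hfA hgB, hAf, hBg]
  exact ⟨And.left, fun h => ⟨h, hcard A hA B hB h⟩⟩

end Dominates

theorem disjoint_powersetCard_image_insert (n a b : ℕ) :
    Disjoint ((range n).powersetCard a) (((range n).powersetCard b).image (insert n)) := by
  simp only [disjoint_left, mem_image, mem_powersetCard]
  rintro _ ⟨hA, -⟩ ⟨B, -, rfl⟩
  exact notMem_range_self (hA (mem_insert_self n B))

theorem card_dominatingPairs_succ (n a b : ℕ) (hba : b ≤ a) :
    #(dominatingPairs (n + 1) (a + 1) (b + 1)) =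
      #(dominatingPairs n (a + 1) (b + 1)) + #(dominatingPairs n (a + 1) b) +
        (#(dominatingPairs n a (b + 1)) + #(dominatingPairs n a b)) := by
  classical
  have hsub (c : ℕ) : ∀ A ∈ (range n).powersetCard c, A ⊆ range n :=
    fun A hA => (mem_powersetCard.1 hA).1
  have hid (A) (hA : A ⊆ range n) : id A ⊆ range (n + 1) ∧ {x ∈ id A | x < n} = A :=
    ⟨hA.trans (range_subset_range.2 n.le_succ), filter_lt_eq_self_of_subset_range hA le_rfl⟩
  have hins (A) (hA : A ⊆ range n) :
      insert n A ⊆ range (n + 1) ∧ {x ∈ insert n A | x < n} = A :=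
    ⟨range_add_one ▸ insert_subset_insert n hA, filter_lt_insert_self hA⟩
  have hcard_ins {A : Finset ℕ} (hA : A ⊆ range n) : #(insert n A) = #A + 1 :=
    card_insert_of_notMem fun h => notMem_range_self (hA h)
  unfold dominatingPairs
  rw [range_add_one, powersetCard_succ_insert notMem_range_self,
    powersetCard_succ_insert notMem_range_self, card_filter_union_product _
      (disjoint_powersetCard_image_insert n _ _) (disjoint_powersetCard_image_insert n _ _)]
  congr 2
  · simpa using card_filter_dominates_image_product hid hins (hsub _) (hsub _)
      fun A hA B hB _ => by
        rw [id_eq, hcard_ins (hsub _ B hB), (mem_powersetCard.1 hA).2, (mem_powersetCard.1 hB).2]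
        omega
  · simpa using card_filter_dominates_image_product hins hid (hsub _) (hsub _)
      fun A hA B hB h => by
        rw [id_eq, hcard_ins (hsub _ A hA)]
        exact (h.card_le (hsub _ A hA) (hsub _ B hB)).trans (Nat.le_succ _)
  · exact card_filter_dominates_image_product hins hins (hsub _) (hsub _) fun A hA B hB h => by
      rw [hcard_ins (hsub _ A hA), hcard_ins (hsub _ B hB)]
      exact Nat.succ_le_succ (h.card_le (hsub _ A hA) (hsub _ B hB))

theorem card_dominatingPairs_of_lt {n a b : ℕ} (h : a < b) : #(dominatingPairs n a b) = 0 := by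
  classical
  refine card_eq_zero.2 (filter_eq_empty_iff.2 fun ⟨A, B⟩ hp hAB => ?_)
  obtain ⟨⟨hA, hAc⟩, hB, hBc⟩ := mem_product.1 hp |>.imp mem_powersetCard.1 mem_powersetCard.1
  have := hAB.card_le hA hB
  omega

theorem card_dominatingPairs_zero_right (n a : ℕ) : #(dominatingPairs n a 0) = n.choose a := by
  classical
  rw [dominatingPairs, filter_true_of_mem fun p hp t => by
    simp [card_eq_zero.1 (mem_powersetCard.1 (mem_product.1 hp).2).2]]
  simp

theorem card_dominatingPairs_add_choose_mul_choose (n a b : ℕ) (hba : b ≤ a) :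
    #(dominatingPairs n a (b + 1)) + n.choose (a + 1) * n.choose b =
      n.choose a * n.choose (b + 1) := by
  induction n generalizing a b with
  | zero => simp +contextual [dominatingPairs]
  | succ n ih =>
    rcases hba.eq_or_lt with rfl | hba
    · rw [card_dominatingPairs_of_lt (Nat.lt_succ_self b), zero_add, mul_comm]
    obtain ⟨a, rfl⟩ := Nat.exists_eq_add_one_of_ne_zero (Nat.ne_zero_of_lt hba)
    have hba : b ≤ a := Nat.le_of_lt_succ hba
    rw [card_dominatingPairs_succ n a b hba]
    rcases b with _ | b
    · have h1 := ih (a + 1) 0 (Nat.zero_le _)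
      have h2 := ih a 0 (Nat.zero_le _)
      simp only [card_dominatingPairs_zero_right, Nat.choose_succ_succ, Nat.choose_zero_right] at *
      linear_combination h1 + h2
    · have h1 := ih (a + 1) (b + 1) (by omega)
      have h2 := ih a (b + 1) hba
      have h3 := ih (a + 1) b (by omega)
      have h4 := ih a b (by omega)
      simp only [Nat.choose_succ_succ] at *
      linear_combination h1 + h2 + h3 + h4

theorem succ_mul_card_dominatingPairs_self (n k : ℕ) :
    (k + 1) * #(dominatingPairs n k k) = n.choose k * (n + 1).choose k := by
  rcases k with _ | k
  · simp [card_dominatingPairs_zero_right]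
  have h := card_dominatingPairs_add_choose_mul_choose n (k + 1) k (Nat.le_succ k)
  have h1 := Nat.choose_succ_mul_add_choose_mul n k
  have h2 := Nat.choose_succ_mul_add_choose_mul n (k + 1)
  rw [Nat.choose_succ_succ]
  linear_combination (k + 2) * h + n.choose k * h2.symm + n.choose (k + 1) * h1

theorem dominates_image_iff {k : ℕ} {f g : Fin k → ℕ} (hf : StrictMono f) (hg : StrictMono g) :
    Dominates (univ.image f) (univ.image g) ↔ ∀ i, f i ≤ g i := by
  have hcount {h : Fin k → ℕ} (hh : StrictMono h) (t : ℕ) :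
      #{x ∈ univ.image h | x < t} = #{i | h i < t} := by
    rw [filter_image, card_image_of_injective _ hh.injective]
  simp only [Dominates, hcount hf, hcount hg]
  refine ⟨fun h i => ?_, fun h t => card_le_card fun i hi => ?_⟩
  · by_contra! hgf
    have hg_ge : #(Iic i) ≤ #{j | g j < g i + 1} := card_le_card fun j hj => by
      simpa [Nat.lt_succ_iff, hg.le_iff_le] using hj
    have hf_le : #{j | f j < g i + 1} ≤ #(Iio i) := card_le_card fun j hj => by
      simp only [mem_filter, mem_univ, true_and, Nat.lt_succ_iff] at hj
      exact mem_Iio.2 (hf.lt_iff_lt.1 (hj.trans_lt hgf))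
    rw [Fin.card_Iic] at hg_ge
    rw [Fin.card_Iio] at hf_le
    have := h (g i + 1)
    omega
  · simp only [mem_filter, mem_univ, true_and] at hi ⊢
    exact (h i).trans_lt hi

theorem image_val_mem_powersetCard {k n : ℕ} {c : Fin k → Fin n} (hc : StrictMono c) :
    univ.image (fun i => (c i : ℕ)) ∈ (range n).powersetCard k := by
  refine mem_powersetCard.2 ⟨fun x hx => ?_, ?_⟩
  · obtain ⟨i, -, rfl⟩ := mem_image.1 hx
    exact mem_range.2 (c i).isLt
  · rw [card_image_of_injective (f := fun i => (c i : ℕ)) _ (Fin.val_injective.comp hc.injective),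
      card_fin]

theorem exists_strictMono_image_val_eq {k n : ℕ} {A : Finset ℕ}
    (hA : A ∈ (range n).powersetCard k) :
    ∃ c : Fin k → Fin n, StrictMono c ∧ univ.image (fun i => (c i : ℕ)) = A := by
  obtain ⟨hAn, hAk⟩ := mem_powersetCard.1 hA
  exact ⟨fun i => ⟨A.orderEmbOfFin hAk i, mem_range.1 (hAn (orderEmbOfFin_mem A hAk i))⟩,
    fun i j hij => (A.orderEmbOfFin hAk).strictMono hij, image_orderEmbOfFin_univ A hAk⟩

theorem twoColumnTableau_iff {k n : ℕ} (T : Fin k → Fin 2 → Fin n) :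
    ((∀ (i : Fin k) (j j' : Fin 2), j ≤ j' → T i j ≤ T i j') ∧
      (∀ (i i' : Fin k) (j : Fin 2), i < i' → T i j < T i' j)) ↔
    (∀ i, T i 0 ≤ T i 1) ∧ StrictMono (T · 0) ∧ StrictMono (T · 1) := by
  simp [Fin.forall_fin_two, StrictMono, forall_and]

theorem card_twoColumnTableaux (k n : ℕ) :
    #{T : Fin k → Fin 2 → Fin n | (∀ (i : Fin k) (j j' : Fin 2), j ≤ j' → T i j ≤ T i j') ∧
        (∀ (i i' : Fin k) (j : Fin 2), i < i' → T i j < T i' j)} = #(dominatingPairs n k k) := by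
  classical
  simp only [twoColumnTableau_iff]
  have hval {c : Fin k → Fin n} (hc : StrictMono c) : StrictMono fun i => (c i : ℕ) :=
    Fin.val_strictMono.comp hc
  refine card_nbij (fun T => (univ.image fun i => (T i 0 : ℕ), univ.image fun i => (T i 1 : ℕ)))
    (fun T hT => ?_) (fun T hT T' hT' h => ?_) fun ⟨A, B⟩ hp => ?_
  · obtain ⟨hrow, h0, h1⟩ := (mem_filter.1 hT).2
    exact mem_filter.2 ⟨mem_product.2 ⟨image_val_mem_powersetCard h0,
      image_val_mem_powersetCard h1⟩, (dominates_image_iff (hval h0) (hval h1)).2 hrow⟩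
  · obtain ⟨-, h0, h1⟩ := (mem_filter.1 hT).2
    obtain ⟨-, h0', h1'⟩ := (mem_filter.1 hT').2
    obtain ⟨himg0, himg1⟩ := Prod.ext_iff.1 h
    have e0 := (hval h0).eq_of_image_univ_eq (hval h0') himg0
    have e1 := (hval h1).eq_of_image_univ_eq (hval h1') himg1
    funext i j
    fin_cases j
    · exact Fin.ext (congrFun e0 i)
    · exact Fin.ext (congrFun e1 i)
  · obtain ⟨hp, hdom⟩ := mem_filter.1 hp
    obtain ⟨hA, hB⟩ := mem_product.1 hp
    obtain ⟨cA, hcA, rfl⟩ := exists_strictMono_image_val_eq hA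
    obtain ⟨cB, hcB, rfl⟩ := exists_strictMono_image_val_eq hB
    refine ⟨fun i => ![cA i, cB i], mem_filter.2 ⟨mem_univ _, fun i => ?_, hcA, hcB⟩, by simp⟩
    exact (dominates_image_iff (hval hcA) (hval hcB)).1 hdom i

theorem prod_two_column_hook (n k : ℕ) :
    ∏ i ∈ Icc (1 : ℕ) k, ∏ j ∈ Icc (1 : ℕ) 2,
        (((n : ℚ) - (i : ℚ) + (j : ℚ)) / ((k : ℚ) + 2 - (i : ℚ) - (j : ℚ) + 1)) =
      n.choose k * (n + 1).choose k / (k + 1) := by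
  have hrow (i : ℕ) : ∏ j ∈ Icc (1 : ℕ) 2,
      (((n : ℚ) - (i : ℚ) + (j : ℚ)) / ((k : ℚ) + 2 - (i : ℚ) - (j : ℚ) + 1)) =
      ((n : ℚ) - i + 1) * (((n + 1 : ℕ) : ℚ) - i + 1) /
        ((((k + 1 : ℕ) : ℚ) - i + 1) * ((k : ℚ) - i + 1)) := by
    rw [show Icc (1 : ℕ) 2 = {1, 2} from rfl, prod_pair (by norm_num), div_mul_div_comm]
    push_cast
    ring_nf
  simp only [hrow, prod_div_distrib, prod_mul_distrib, prod_Icc_natCast_sub_add_one,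
    Nat.choose_succ_self_right, Nat.choose_self]
  have : (k ! : ℚ) ≠ 0 := by positivity
  push_cast
  field_simp

/-- The number of `k`-row, 2-column rectangular SSYT with entries in `[n]` equals
`a_{k,n,2}`. -/
theorem count_two_column_ssyt
    (k n : ℕ) :
    ((Finset.univ.filter (fun T : Fin k → Fin 2 → Fin n =>
        (∀ (i : Fin k) (j j' : Fin 2), j ≤ j' → T i j ≤ T i j') ∧
        (∀ (i i' : Fin k) (j : Fin 2), i < i' → T i j < T i' j))).card : ℚ)
      = ∏ i ∈ Finset.Icc (1:ℕ) k, ∏ j ∈ Finset.Icc (1:ℕ) 2,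
          (((n : ℚ) - (i:ℚ) + (j:ℚ)) / ((k : ℚ) + 2 - (i:ℚ) - (j:ℚ) + 1)) := by
  rw [card_twoColumnTableaux, prod_two_column_hook, eq_div_iff (by positivity), mul_comm]
  exact_mod_cast succ_mul_card_dominatingPairs_self n k
end

section
/- The number of semistandard Young tableaux of rectangular shape with 2 rows, m columns, and entries in [n] equals a_{2,n,m} = Π_{i=1}^{2} Π_{j=1}^{m} (n - i + j)/(2 + m - i - j + 1). -/
/-!
A tableau with two rows is a weakly increasing sequence of columns `(a, b)` with `a < b`,
for the product order on `ℕ × ℕ`. Removing the last column `(u, v)` leaves such a sequence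
whose first row is at most `u` and whose second row is at most `v`; so the number `c m x y` of
tableaux with `m` columns, first row `< x` and second row `< y` satisfies
`c (m + 1) x y = ∑_{u < x} ∑_{u < v < y} c m (u + 1) (v + 1)`. For `x ≤ y` this recursion is
solved by the flagged Jacobi–Trudi determinant `h_m(x) h_m(y) - h_{m+1}(x) h_{m-1}(y)` with
`h_k(x) = multichoose x k`: the cross terms cancel after summing with the hockey-stick identity.
At `x = y = n` the determinant equals the hook-content product.
-/

open Finset
open scoped Nat

section MonotoneSeqs

variable {α : Type*} [Preorder α]

open Classical in
noncomputable def monotoneSeqs (m : ℕ) (D : Finset α) : Finset (Fin m → α) :=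
  {f ∈ Fintype.piFinset fun _ ↦ D | Monotone f}

theorem Fin.monotone_snoc_iff {m : ℕ} {f : Fin m → α} {a : α} :
    Monotone (Fin.snoc f a : Fin (m + 1) → α) ↔ Monotone f ∧ ∀ i, f i ≤ a := by
  refine ⟨fun h ↦ ⟨fun i j hij ↦ ?_, fun i ↦ ?_⟩, fun ⟨hf, ha⟩ i j hij ↦ ?_⟩
  · simpa using h (Fin.castSucc_le_castSucc_iff.2 hij)
  · simpa using h (Fin.castSucc_lt_last i).le
  · induction j using Fin.lastCases with
    | last => induction i using Fin.lastCases <;> simp [ha]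
    | cast j =>
      induction i using Fin.lastCases with
      | last => exact absurd hij (Fin.castSucc_lt_last j).not_ge
      | cast i => simpa using hf (Fin.castSucc_le_castSucc_iff.1 hij)

theorem card_monotoneSeqs_zero (D : Finset α) : #(monotoneSeqs 0 D) = 1 := by
  simp [monotoneSeqs, Subsingleton.monotone]

variable [DecidableLE α]

theorem snoc_mem_monotoneSeqs_iff {m : ℕ} {D : Finset α} {f : Fin m → α} {a : α} :
    Fin.snoc f a ∈ monotoneSeqs (m + 1) D ↔ a ∈ D ∧ f ∈ monotoneSeqs m {e ∈ D | e ≤ a} := by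
  simp only [monotoneSeqs, mem_filter, Fintype.mem_piFinset, Fin.forall_fin_succ',
    Fin.snoc_castSucc, Fin.snoc_last, Fin.monotone_snoc_iff, forall_and]
  tauto

theorem card_monotoneSeqs_succ (m : ℕ) (D : Finset α) :
    #(monotoneSeqs (m + 1) D) = ∑ d ∈ D, #(monotoneSeqs m {e ∈ D | e ≤ d}) := by
  rw [← card_sigma]
  refine card_nbij' (fun s ↦ ⟨s (Fin.last m), Fin.init s⟩) (fun p ↦ Fin.snoc p.2 p.1)
    (fun s hs ↦ ?_) (fun p hp ↦ ?_) (fun s _ ↦ ?_) (fun p _ ↦ ?_)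
  · rw [mem_coe, ← Fin.snoc_init_self s, snoc_mem_monotoneSeqs_iff] at hs
    simpa using hs
  · simpa [snoc_mem_monotoneSeqs_iff] using hp
  · simp
  · simp

end MonotoneSeqs

theorem Nat.multichoose_succ_eq_sum (y k : ℕ) :
    y.multichoose (k + 1) = ∑ v ∈ range y, (v + 1).multichoose k := by
  induction y with
  | zero => simp
  | succ y ih => rw [sum_range_succ, ← ih, Nat.multichoose_succ_succ]

theorem sum_Ico_multichoose {a y : ℕ} (k : ℕ) (hay : a ≤ y) :
    ∑ v ∈ Ico a y, ((v + 1).multichoose k : ℤ) =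
      y.multichoose (k + 1) - a.multichoose (k + 1) := by
  simp only [sum_Ico_eq_sub _ hay, Nat.multichoose_succ_eq_sum, Nat.cast_sum]

def strictPairs (x y : ℕ) : Finset (ℕ × ℕ) := {p ∈ range x ×ˢ range y | p.1 < p.2}

theorem filter_le_strictPairs {x y u v : ℕ} (hu : u < x) (hv : v < y) :
    {p ∈ strictPairs x y | p ≤ (u, v)} = strictPairs (u + 1) (v + 1) := by
  ext ⟨a, b⟩
  simp only [strictPairs, mem_filter, mem_product, mem_range, Prod.mk_le_mk]
  omega

theorem sum_strictPairs {M : Type*} [AddCommMonoid M] (x y : ℕ) (f : ℕ → ℕ → M) :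
    ∑ p ∈ strictPairs x y, f p.1 p.2 = ∑ u ∈ range x, ∑ v ∈ Ico (u + 1) y, f u v := by
  rw [strictPairs, sum_filter, sum_product]
  refine sum_congr rfl fun u _ ↦ ?_
  rw [← sum_filter]
  congr 1
  ext v
  simp only [mem_filter, mem_range, mem_Ico]
  omega

theorem card_monotoneSeqs_strictPairs_succ (m x y : ℕ) :
    #(monotoneSeqs (m + 1) (strictPairs x y)) =
      ∑ u ∈ range x, ∑ v ∈ Ico (u + 1) y, #(monotoneSeqs m (strictPairs (u + 1) (v + 1))) := by
  rw [card_monotoneSeqs_succ,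
    sum_strictPairs x y fun u v ↦ #(monotoneSeqs m {p ∈ strictPairs x y | p ≤ (u, v)})]
  refine sum_congr rfl fun u hu ↦ sum_congr rfl fun v hv ↦ ?_
  rw [filter_le_strictPairs (mem_range.1 hu) (mem_Ico.1 hv).2]

theorem card_monotoneSeqs_strictPairs (m : ℕ) {x y : ℕ} (hxy : x ≤ y) :
    (#(monotoneSeqs (m + 1) (strictPairs x y)) : ℤ) =
      x.multichoose (m + 1) * y.multichoose (m + 1) - x.multichoose (m + 2) * y.multichoose m := by
  induction m generalizing x y with
  | zero =>
    have h (u : ℕ) (hu : u < x) :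
        ∑ v ∈ Ico (u + 1) y, (1 : ℤ) = y.multichoose 1 - (u + 1).multichoose 1 := by
      simpa using sum_Ico_multichoose 0 (show u + 1 ≤ y by omega)
    rw [card_monotoneSeqs_strictPairs_succ]
    simp only [card_monotoneSeqs_zero, Nat.cast_sum, Nat.cast_one]
    rw [sum_congr rfl fun u hu ↦ h u (mem_range.1 hu), sum_sub_distrib, sum_const, card_range,
      ← Nat.cast_sum, ← Nat.multichoose_succ_eq_sum]
    simp [Nat.multichoose_one_right]
  | succ m ih =>
    have h (u : ℕ) (hu : u < x) :
        ∑ v ∈ Ico (u + 1) y, (#(monotoneSeqs (m + 1) (strictPairs (u + 1) (v + 1))) : ℤ) =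
          (u + 1).multichoose (m + 1) * y.multichoose (m + 2) -
            (u + 1).multichoose (m + 2) * y.multichoose (m + 1) := by
      have huy : u + 1 ≤ y := by omega
      rw [sum_congr rfl fun v hv ↦ ih (by have := (mem_Ico.1 hv).1; omega), sum_sub_distrib,
        ← mul_sum, ← mul_sum, sum_Ico_multichoose _ huy, sum_Ico_multichoose _ huy]
      ring
    rw [card_monotoneSeqs_strictPairs_succ]
    push_cast
    rw [sum_congr rfl fun u hu ↦ h u (mem_range.1 hu), sum_sub_distrib, ← sum_mul, ← sum_mul]
    simp only [← Nat.cast_sum, ← Nat.multichoose_succ_eq_sum]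

theorem Nat.cast_multichoose_eq_prod_div {K : Type*} [Field K] [CharZero K] (n k : ℕ) :
    (n.multichoose k : K) = (∏ i ∈ range k, ((n : K) + i)) / k ! := by
  rw [eq_div_iff (Nat.cast_ne_zero.2 k.factorial_ne_zero), Nat.multichoose_eq, mul_comm]
  exact_mod_cast (Nat.ascFactorial_eq_factorial_mul_choose' n k).symm.trans
    (Nat.ascFactorial_eq_prod_range n k)

theorem prod_Icc_one_eq_prod_range {M : Type*} [CommMonoid M] (f : ℕ → M) (k : ℕ) :
    ∏ j ∈ Icc 1 k, f j = ∏ j ∈ range k, f (j + 1) := by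
  simp [← Ico_add_one_right_eq_Icc, prod_Ico_eq_prod_range, add_comm]

theorem prod_Icc_one_reflect {M : Type*} [CommMonoid M] (f : ℕ → M) (k : ℕ) :
    ∏ j ∈ Icc 1 k, f (k - j) = ∏ j ∈ range k, f j := by
  simp [← Ico_add_one_right_eq_Icc, prod_Ico_reflect f 1 le_rfl]

theorem prod_Icc_div_eq {K : Type*} [Field K] (a c : K) (k : ℕ) :
    ∏ j ∈ Icc 1 k, (a + j) / (c + k - j) =
      (∏ j ∈ range k, (a + 1 + j)) / ∏ j ∈ range k, (c + j) := by
  rw [prod_div_distrib, prod_Icc_one_eq_prod_range (fun j ↦ a + j),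
    ← prod_Icc_one_reflect fun j ↦ c + j]
  congr 1
  · exact prod_congr rfl fun j _ ↦ by push_cast; ring
  · exact prod_congr rfl fun j hj ↦ by rw [Nat.cast_sub (mem_Icc.1 hj).2]; ring

theorem Nat.cast_multichoose_succ {K : Type*} [Field K] [CharZero K] (n k : ℕ) :
    (n.multichoose (k + 1) : K) = n.multichoose k * (n + k) / (k + 1) := by
  rw [Nat.cast_multichoose_eq_prod_div, Nat.cast_multichoose_eq_prod_div, prod_range_succ,
    Nat.factorial_succ]
  push_cast
  field_simp

theorem prod_range_one_add_cast {K : Type*} [CommSemiring K] (k : ℕ) :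
    ∏ j ∈ range k, ((1 : K) + j) = k ! := by
  rw [← Finset.prod_range_add_one_eq_factorial]
  push_cast
  simp [add_comm]

theorem prod_range_two_add_cast {K : Type*} [CommSemiring K] (k : ℕ) :
    ∏ j ∈ range k, ((2 : K) + j) = (k + 1)! := by
  rw [← prod_range_one_add_cast, prod_range_succ']
  push_cast
  simp only [add_zero, mul_one]
  exact prod_congr rfl fun j _ ↦ by ring

theorem prod_hook_row_one (n k : ℕ) :
    ∏ j ∈ Icc (1 : ℕ) (k + 1),
        (((n : ℚ) - ((1 : ℕ) : ℚ) + j) / (2 + ((k + 1 : ℕ) : ℚ) - ((1 : ℕ) : ℚ) - j + 1)) =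
      n.multichoose (k + 1) / (k + 2) := by
  calc _ = ∏ j ∈ Icc (1 : ℕ) (k + 1), (((n : ℚ) - 1 + j) / (2 + ((k + 1 : ℕ) : ℚ) - j)) :=
        prod_congr rfl fun j _ ↦ by push_cast; ring
    _ = (∏ j ∈ range (k + 1), ((n : ℚ) + j)) / (k + 2)! := by
        rw [prod_Icc_div_eq, prod_range_two_add_cast]
        congr 1
        exact prod_congr rfl fun j _ ↦ by ring
    _ = _ := by
        rw [Nat.cast_multichoose_eq_prod_div, Nat.factorial_succ (k + 1)]
        push_cast
        field_simp
        ring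

theorem prod_hook_row_two (n k : ℕ) :
    ∏ j ∈ Icc (1 : ℕ) (k + 1),
        (((n : ℚ) - ((2 : ℕ) : ℚ) + j) / (2 + ((k + 1 : ℕ) : ℚ) - ((2 : ℕ) : ℚ) - j + 1)) =
      (n - 1) * n.multichoose k / (k + 1) := by
  calc _ = ∏ j ∈ Icc (1 : ℕ) (k + 1), (((n : ℚ) - 2 + j) / (1 + ((k + 1 : ℕ) : ℚ) - j)) :=
        prod_congr rfl fun j _ ↦ by push_cast; ring
    _ = (n - 1) * (∏ j ∈ range k, ((n : ℚ) + j)) / (k + 1)! := by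
        rw [prod_Icc_div_eq, prod_range_one_add_cast, prod_range_succ', mul_comm]
        congr 2
        · ring
        · exact prod_congr rfl fun j _ ↦ by push_cast; ring
    _ = _ := by
        rw [Nat.cast_multichoose_eq_prod_div, Nat.factorial_succ]
        push_cast
        field_simp

theorem prod_hook_two_rows (n k : ℕ) :
    ∏ i ∈ Icc (1 : ℕ) 2, ∏ j ∈ Icc (1 : ℕ) (k + 1),
        (((n : ℚ) - (i : ℚ) + (j : ℚ)) / ((2 : ℚ) + ((k + 1 : ℕ) : ℚ) - (i : ℚ) - (j : ℚ) + 1)) =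
      (n.multichoose (k + 1) : ℚ) * n.multichoose (k + 1) -
        n.multichoose (k + 2) * n.multichoose k := by
  rw [show Icc (1 : ℕ) 2 = {1, 2} from rfl, prod_pair (by norm_num), prod_hook_row_one,
    prod_hook_row_two, Nat.cast_multichoose_succ n (k + 1), Nat.cast_multichoose_succ n k]
  push_cast
  field_simp
  ring

theorem twoRowSSYT_conditions_iff {m n : ℕ} (T : Fin 2 → Fin m → Fin n) :
    ((∀ (i : Fin 2) (j j' : Fin m), j ≤ j' → T i j ≤ T i j') ∧
        (∀ (i i' : Fin 2) (j : Fin m), i < i' → T i j < T i' j)) ↔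
      (Monotone (T 0) ∧ Monotone (T 1)) ∧ ∀ j, T 0 j < T 1 j := by
  simp [Fin.forall_fin_two, Monotone]

theorem card_twoRowSSYT_eq (m n : ℕ) :
    (Finset.univ.filter (fun T : Fin 2 → Fin m → Fin n =>
        (∀ (i : Fin 2) (j j' : Fin m), j ≤ j' → T i j ≤ T i j') ∧
        (∀ (i i' : Fin 2) (j : Fin m), i < i' → T i j < T i' j))).card =
      #(monotoneSeqs m (strictPairs n n)) := by
  refine card_bij (fun T _ j ↦ ((T 0 j : ℕ), (T 1 j : ℕ))) (fun T hT ↦ ?_)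
    (fun T _ T' _ h ↦ ?_) (fun s hs ↦ ?_)
  · rw [mem_filter, twoRowSSYT_conditions_iff] at hT
    simp only [monotoneSeqs, strictPairs, mem_filter, Fintype.mem_piFinset, mem_product, mem_range]
    exact ⟨fun j ↦ ⟨⟨(T 0 j).2, (T 1 j).2⟩, hT.2.2 j⟩,
      fun j j' hj ↦ Prod.mk_le_mk.2 ⟨hT.2.1.1 hj, hT.2.1.2 hj⟩⟩
  · funext i j
    have := congrFun h j
    simp only [Prod.mk.injEq] at this
    fin_cases i <;> exact Fin.ext (by simp [this])
  · simp only [monotoneSeqs, strictPairs, mem_filter, Fintype.mem_piFinset, mem_product,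
      mem_range] at hs
    obtain ⟨hbound, hmono⟩ := hs
    refine ⟨![fun j ↦ ⟨(s j).1, (hbound j).1.1⟩, fun j ↦ ⟨(s j).2, (hbound j).1.2⟩], ?_, rfl⟩
    rw [mem_filter, twoRowSSYT_conditions_iff]
    exact ⟨mem_univ _, ⟨fun j j' hj ↦ (hmono hj).1, fun j j' hj ↦ (hmono hj).2⟩,
      fun j ↦ (hbound j).2⟩

/-- The number of 2-row, `m`-column rectangular SSYT with entries in `[n]` equals
`a_{2,n,m}`. -/
theorem count_two_row_ssyt
    (m n : ℕ) :
    ((Finset.univ.filter (fun T : Fin 2 → Fin m → Fin n =>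
        (∀ (i : Fin 2) (j j' : Fin m), j ≤ j' → T i j ≤ T i j') ∧
        (∀ (i i' : Fin 2) (j : Fin m), i < i' → T i j < T i' j))).card : ℚ)
      = ∏ i ∈ Finset.Icc (1:ℕ) 2, ∏ j ∈ Finset.Icc (1:ℕ) m,
          (((n : ℚ) - (i:ℚ) + (j:ℚ)) / ((2 : ℚ) + (m:ℚ) - (i:ℚ) - (j:ℚ) + 1)) := by
  rw [card_twoRowSSYT_eq]
  cases m with
  | zero => simp [card_monotoneSeqs_zero]
  | succ k =>
    rw [prod_hook_two_rows]
    exact_mod_cast card_monotoneSeqs_strictPairs k le_rfl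
end
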